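/- Let r, c, m, p, d₁, d₂, l > 0 and 0 < a < 1, and let (u*, v*) be an interior equilibrium of the reaction system with (a+1)/2 < u* and trace tr = −r·u*·(2u*−a−1) + m·(1−p·u*) < 0 and determinant det = m·p·u*·v*·[r·c·u*·(1+a−2u*) + (1+c·v*)·(1+2c·v*)] > 0. For n ∈ ℕ define Tₙ = −(d₁+d₂)·n²/l² + tr and Jₙ = d₁·d₂·n⁴/l⁴ − r·u*·(1+a−2u*)·d₂·n²/l² − m·p·c·u*·v*·d₁·n²/l² + det, and for n ≥ 1 define d₂ᵀ(n, d₁) = (m·p·c·u*·v*·d₁·n²/l² − det)/(d₁·n⁴/l⁴ + r·u*·(2u*−1−a)·n²/l²). Then Tₙ < 0 for every n ∈ ℕ, and: (i) if d₂ > d₂ᵀ(n, d₁) for every n ≥ 1, then for every n ∈ ℕ every complex root λ of λ² − Tₙ·λ + Jₙ = 0 has negative real part (the constant steady state is linearly stable); (ii) if there exists n ∈ ℕ with n > l·√(det/(m·p·c·u*·v*·d₁)) and d₂ < d₂ᵀ(n, d₁), then Jₙ < 0 and the quadratic λ² − Tₙ·λ + Jₙ = 0 has a positive real root (Turing instability).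 -/
import Mathlib


lemma quad_neg_re (T J : ℝ) (hT : T < 0) (hJ : 0 < J) (lam : ℂ)
    (h : lam ^ 2 - (T : ℂ) * lam + (J : ℂ) = 0) : lam.re < 0 := by
  have hre := congrArg Complex.re h
  have him := congrArg Complex.im h
  simp [pow_two, Complex.mul_re, Complex.mul_im] at hre him
  set x := lam.re
  set y := lam.im
  by_cases hy : y = 0
  · rw [hy] at hre
    by_contra hx
    push_neg at hx
    nlinarith
  · have h2 : y * (2 * x - T) = 0 := by nlinarith [him]
    have := (mul_eq_zero.mp h2).resolve_left hy
    linarith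

lemma quad_pos_root (T J : ℝ) (hJ : J < 0) :
    ∃ lam : ℝ, 0 < lam ∧ lam ^ 2 - T * lam + J = 0 := by
  have h4 : 0 ≤ T ^ 2 - 4 * J := by nlinarith [sq_nonneg T]
  have hs : Real.sqrt (T ^ 2 - 4 * J) ^ 2 = T ^ 2 - 4 * J := Real.sq_sqrt h4
  have hs0 : 0 ≤ Real.sqrt (T ^ 2 - 4 * J) := Real.sqrt_nonneg _
  exact ⟨(T + Real.sqrt (T ^ 2 - 4 * J)) / 2, by nlinarith, by linear_combination hs / 4⟩

/-- Trace of the Jacobian of the reaction part at the interior equilibrium. -/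
noncomputable def trJ (r m p a u : ℝ) : ℝ :=
  -r * u * (2 * u - a - 1) + m * (1 - p * u)

/-- Determinant of the Jacobian of the reaction part at the interior equilibrium. -/
noncomputable def detJ (r c m p a u v : ℝ) : ℝ :=
  m * p * u * v * (r * c * u * (1 + a - 2 * u) + (1 + c * v) * (1 + 2 * c * v))

/-- Trace of the linearization of the diffusive system for wave number `n`. -/
noncomputable def Tn (r m p a u d₁ d₂ l : ℝ) (n : ℕ) : ℝ :=
  -(d₁ + d₂) * (n : ℝ) ^ 2 / l ^ 2 + trJ r m p a u

/-- Determinant of the linearization of the diffusive system for wave number `n`. -/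
noncomputable def Jn (r c m p a u v d₁ d₂ l : ℝ) (n : ℕ) : ℝ :=
  d₁ * d₂ * (n : ℝ) ^ 4 / l ^ 4 - r * u * (1 + a - 2 * u) * d₂ * (n : ℝ) ^ 2 / l ^ 2 -
    m * p * c * u * v * d₁ * (n : ℝ) ^ 2 / l ^ 2 + detJ r c m p a u v

/-- The Turing bifurcation value `d₂ᵀ(n, d₁)`. -/
noncomputable def d2T (r c m p a u v d₁ l : ℝ) (n : ℕ) : ℝ :=
  (m * p * c * u * v * d₁ * (n : ℝ) ^ 2 / l ^ 2 - detJ r c m p a u v) /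
    (d₁ * (n : ℝ) ^ 4 / l ^ 4 + r * u * (2 * u - 1 - a) * (n : ℝ) ^ 2 / l ^ 2)

/-- Diffusion-driven (Turing) stability and instability of the constant steady state:
`Tₙ < 0` for all `n`; if `d₂ > d₂ᵀ(n,d₁)` for all `n ≥ 1` then every root of every
characteristic quadratic has negative real part; if `d₂ < d₂ᵀ(n,d₁)` for some
`n > l·√(det/(mpcu*v*d₁))` then `Jₙ < 0` and the quadratic has a positive real root. -/
theorem stmt_16 (r c m p a u v d₁ d₂ l : ℝ)
    (hr : 0 < r) (hc : 0 < c) (hm : 0 < m) (hp : 0 < p)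
    (ha0 : 0 < a) (ha1 : a < 1) (hd₁ : 0 < d₁) (hd₂ : 0 < d₂) (hl : 0 < l)
    (hu : 0 < u) (hv : 0 < v)
    (he1 : r * (1 - u) * (u - a) = (1 + c * v) * v)
    (he2 : p * u * (1 + c * v) = 1)
    (hmid : (a + 1) / 2 < u)
    (htr : trJ r m p a u < 0)
    (hdet : 0 < detJ r c m p a u v) :
    (∀ n : ℕ, Tn r m p a u d₁ d₂ l n < 0) ∧
    ((∀ n : ℕ, 1 ≤ n → d2T r c m p a u v d₁ l n < d₂) →
      ∀ n : ℕ, ∀ lam : ℂ,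
        lam ^ 2 - (Tn r m p a u d₁ d₂ l n : ℂ) * lam + (Jn r c m p a u v d₁ d₂ l n : ℂ) = 0 →
        lam.re < 0) ∧
    (∀ n : ℕ, l * Real.sqrt (detJ r c m p a u v / (m * p * c * u * v * d₁)) < (n : ℝ) →
      d₂ < d2T r c m p a u v d₁ l n →
      Jn r c m p a u v d₁ d₂ l n < 0 ∧
      ∃ lam : ℝ, 0 < lam ∧
        lam ^ 2 - Tn r m p a u d₁ d₂ l n * lam + Jn r c m p a u v d₁ d₂ l n = 0) := by
  
  have hua : 0 < 2 * u - 1 - a := by linarith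
  have hTn : ∀ n : ℕ, Tn r m p a u d₁ d₂ l n < 0 := by
    intro n
    have h1 : 0 ≤ (d₁ + d₂) * (n : ℝ) ^ 2 / l ^ 2 := by positivity
    have h2 : -(d₁ + d₂) * (n : ℝ) ^ 2 / l ^ 2 = -((d₁ + d₂) * (n : ℝ) ^ 2 / l ^ 2) := by ring
    unfold Tn
    rw [h2]
    linarith
  have hDpos : ∀ n : ℕ, 1 ≤ n →
      0 < d₁ * (n : ℝ) ^ 4 / l ^ 4 + r * u * (2 * u - 1 - a) * (n : ℝ) ^ 2 / l ^ 2 := by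
    intro n hn
    have hn0 : (0 : ℝ) < (n : ℝ) := by exact_mod_cast hn
    have t1 : 0 < d₁ * (n : ℝ) ^ 4 / l ^ 4 := by positivity
    have t2 : 0 < r * u * (2 * u - 1 - a) * (n : ℝ) ^ 2 / l ^ 2 :=
      div_pos (mul_pos (mul_pos (mul_pos hr hu) hua) (pow_pos hn0 2)) (pow_pos hl 2)
    linarith
  have hJeq : ∀ n : ℕ, Jn r c m p a u v d₁ d₂ l n =
      d₂ * (d₁ * (n : ℝ) ^ 4 / l ^ 4 + r * u * (2 * u - 1 - a) * (n : ℝ) ^ 2 / l ^ 2) -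
        (m * p * c * u * v * d₁ * (n : ℝ) ^ 2 / l ^ 2 - detJ r c m p a u v) := by
    intro n; unfold Jn; ring
  refine ⟨hTn, ?_, ?_⟩
  · intro hyp n lam heq
    have hJpos : 0 < Jn r c m p a u v d₁ d₂ l n := by
      rcases Nat.eq_zero_or_pos n with h0 | h1
      · subst h0; simpa [Jn] using hdet
      · have hD := hDpos n h1
        have hd' := hyp n h1
        rw [d2T, div_lt_iff₀ hD] at hd'
        rw [hJeq n]; linarith
    exact quad_neg_re _ _ (hTn n) hJpos lam heq
  · intro n hn hd
    have hK : (0 : ℝ) < m * p * c * u * v * d₁ := by positivity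
    have hq : 0 ≤ detJ r c m p a u v / (m * p * c * u * v * d₁) := le_of_lt (div_pos hdet hK)
    have hn0 : (0 : ℝ) < (n : ℝ) :=
      lt_of_le_of_lt (by positivity : (0:ℝ) ≤ l * Real.sqrt _) hn
    have hn1 : 1 ≤ n := by exact_mod_cast (Nat.one_le_iff_ne_zero.mpr (by
      intro h; rw [h] at hn0; simp at hn0))
    have hsq : detJ r c m p a u v * l ^ 2 < m * p * c * u * v * d₁ * (n : ℝ) ^ 2 := by
      have h1 := mul_self_lt_mul_self
        (by positivity : (0:ℝ) ≤ l * Real.sqrt (detJ r c m p a u v / (m * p * c * u * v * d₁))) hn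
      have h2 : Real.sqrt (detJ r c m p a u v / (m * p * c * u * v * d₁)) ^ 2
          * (m * p * c * u * v * d₁) = detJ r c m p a u v := by
        rw [Real.sq_sqrt hq]; field_simp
      nlinarith [h1, h2, hK, sq_nonneg l]
    have hN : detJ r c m p a u v < m * p * c * u * v * d₁ * (n : ℝ) ^ 2 / l ^ 2 := by
      rw [lt_div_iff₀ (pow_pos hl 2)]
      linarith
    have hD := hDpos n hn1
    rw [d2T, lt_div_iff₀ hD] at hd
    have hJneg : Jn r c m p a u v d₁ d₂ l n < 0 := by rw [hJeq n]; linarith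
    exact ⟨hJneg, quad_pos_root _ _ hJneg⟩
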